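/- arXiv:1704.02847 — 5 statements merged into one kernel-verified Lean document; each statement's English description precedes it below -/
import Mathlib

section
/- Let (W,≼) be a poset and S:W→W a function that is NOT forward confluent (i.e., there exist w ≼ v with S(w) ⋠ S(v)). Then there exists a monotone valuation V on W and a formula φ (namely ○p for a propositional variable p) such that ⟦φ⟧ is not upwards-closed under ≼. -/
inductive Fml (P : Type) : Type
  | var (p : P)
  | bot
  | and (φ ψ : Fml P)
  | or (φ ψ : Fml P)
  | impl (φ ψ : Fml P)
  | next (φ : Fml P)
  | dia (φ : Fml P)
  | box (φ : Fml P)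

def Fml.neg {P : Type} (φ : Fml P) : Fml P := Fml.impl φ Fml.bot

/-- Intuitionistic temporal satisfaction over an explicit order `le`
    and successor function `S`. -/
def sat {P W : Type} (le : W → W → Prop) (S : W → W) (V : W → P → Prop) :
    Fml P → W → Prop
  | .var p, w => V w p
  | .bot, _ => False
  | .and φ ψ, w => sat le S V φ w ∧ sat le S V ψ w
  | .or φ ψ, w => sat le S V φ w ∨ sat le S V ψ w
  | .impl φ ψ, w => ∀ v, le w v → sat le S V φ v → sat le S V ψ v
  | .next φ, w => sat le S V φ (S w)
  | .dia φ, w => ∃ k : ℕ, sat le S V φ (S^[k] w)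
  | .box φ, w => ∀ k : ℕ, sat le S V φ (S^[k] w)

def upsetValuation {W P : Type} (le : W → W → Prop) (a : W) : W → P → Prop :=
  fun x _ => le a x

theorem upsetValuation_mono {W P : Type} (le : W → W → Prop)
    (htrans : ∀ a b c, le a b → le b c → le a c) (a : W) :
    ∀ w v, le w v → ∀ q : P, upsetValuation le a w q → upsetValuation le a v q :=
  fun w v hwv _ haw => htrans a w v haw hwv

theorem not_confluent_not_upwards_closed_general {W P : Type} (le : W → W → Prop) (S : W → W)
    (hrefl : ∀ w, le w w)
    (htrans : ∀ a b c, le a b → le b c → le a c)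
    (p : P)
    (hnc : ∃ w v, le w v ∧ ¬ le (S w) (S v)) :
    ∃ V : W → P → Prop,
      (∀ w v, le w v → ∀ q, V w q → V v q) ∧
      ¬ (∀ w v, le w v → sat le S V (Fml.next (Fml.var p)) w →
            sat le S V (Fml.next (Fml.var p)) v) := by
  obtain ⟨w, v, hwv, hS⟩ := hnc
  refine ⟨upsetValuation le (S w), upsetValuation_mono le htrans (S w), fun hup => hS ?_⟩
  exact hup w v hwv (hrefl (S w))

/-- If `S` is not forward confluent, then there is a monotone valuation `V`
    such that the extension of `○p` is not upwards-closed. -/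
theorem not_confluent_not_upwards_closed {W P : Type} (le : W → W → Prop) (S : W → W)
    (hrefl : ∀ w, le w w)
    (htrans : ∀ a b c, le a b → le b c → le a c)
    (hantisymm : ∀ a b, le a b → le b a → a = b)
    (p : P)
    (hnc : ∃ w v, le w v ∧ ¬ le (S w) (S v)) :
    ∃ V : W → P → Prop,
      (∀ w v, le w v → ∀ q, V w q → V v q) ∧
      ¬ (∀ w v, le w v → sat le S V (Fml.next (Fml.var p)) w →
            sat le S V (Fml.next (Fml.var p)) v) :=
  not_confluent_not_upwards_closed_general le S hrefl htrans p hnc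
end

section
/- The formula ¬¬◇□p → ◇¬¬□p is not valid over the class of persistent intuitionistic temporal models. Specifically, let W = ℤ ∪ {r} with r fresh, w ≼ v iff w = r or w = v, S(r) = r, S(n) = n+1 for n ∈ ℤ, and V(x) = {p} iff x ∈ ℤ and x ≥ 0 (else ∅). Then M is a persistent model, M,r ⊨ ¬¬◇□p, but M,r ⊭ ◇¬¬□p. -/
/-- The order on `ℤ ∪ {r}` (with `none` playing the role of `r`):
    `x ≼ y` iff `x = r` or `x = y`. -/
def leZ : Option ℤ → Option ℤ → Prop := fun x y => x = none ∨ x = y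

def SZ : Option ℤ → Option ℤ
  | none => none
  | some n => some (n + 1)

def VZ : Option ℤ → Unit → Prop := fun x _ => ∃ n : ℤ, x = some n ∧ 0 ≤ n

section Semantics

variable {P W : Type} {le : W → W → Prop} {S : W → W} {V : W → P → Prop}

theorem sat_neg_iff {φ : Fml P} {w : W} :
    sat le S V φ.neg w ↔ ∀ v, le w v → ¬ sat le S V φ v :=
  Iff.rfl

theorem sat_neg_neg_iff {φ : Fml P} {w : W} :
    sat le S V φ.neg.neg w ↔ ∀ v, le w v → ∃ u, le v u ∧ sat le S V φ u := by
  simp only [sat_neg_iff, not_forall, not_not, exists_prop]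

theorem not_sat_impl_of_refl {φ ψ : Fml P} {w : W} (hw : le w w)
    (hφ : sat le S V φ w) (hψ : ¬ sat le S V ψ w) : ¬ sat le S V (φ.impl ψ) w :=
  fun h => hψ (h w hw hφ)

end Semantics

theorem leZ_refl (x : Option ℤ) : leZ x x := Or.inr rfl

theorem leZ_some_iff {n : ℤ} {y : Option ℤ} : leZ (some n) y ↔ y = some n := by
  simp [leZ, eq_comm]

theorem SZ_iterate_none (k : ℕ) : SZ^[k] none = none :=
  Function.iterate_fixed rfl k

theorem SZ_iterate_some (n : ℤ) (k : ℕ) : SZ^[k] (some n) = some (n + k) := by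
  induction k with
  | zero => simp
  | succ k ih => rw [Function.iterate_succ_apply', ih, SZ, Nat.cast_succ, add_assoc]

theorem leZ_SZ_SZ {a b : Option ℤ} (h : leZ a b) : leZ (SZ a) (SZ b) := by
  rcases h with rfl | rfl
  · exact Or.inl rfl
  · exact leZ_refl _

theorem exists_leZ_SZ_eq {a b : Option ℤ} (h : leZ (SZ a) b) : ∃ u, leZ a u ∧ SZ u = b := by
  rcases h with h | rfl
  · cases a with
    | some n => cases h
    | none =>
      cases b with
      | none => exact ⟨none, leZ_refl _, rfl⟩
      | some m => exact ⟨some (m - 1), Or.inl rfl, by simp [SZ]⟩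
  · exact ⟨a, leZ_refl _, rfl⟩

theorem VZ_mono {a b : Option ℤ} (h : leZ a b) (q : Unit) (ha : VZ a q) : VZ b q := by
  obtain ⟨n, rfl, hn⟩ := ha
  exact ⟨n, leZ_some_iff.mp h, hn⟩

theorem sat_dia_box_var_some (n : ℤ) : sat leZ SZ VZ (Fml.dia (Fml.box (Fml.var ()))) (some n) :=
  ⟨n.natAbs, fun k => ⟨n + n.natAbs + k, by rw [SZ_iterate_some, SZ_iterate_some], by omega⟩⟩

theorem sat_neg_neg_dia_box_var_none :
    sat leZ SZ VZ (Fml.neg (Fml.neg (Fml.dia (Fml.box (Fml.var ()))))) none := by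
  refine sat_neg_neg_iff.mpr fun v _ => ?_
  cases v with
  | none => exact ⟨some 0, Or.inl rfl, sat_dia_box_var_some 0⟩
  | some n => exact ⟨some n, leZ_refl _, sat_dia_box_var_some n⟩

theorem sat_neg_box_var_some_of_neg {n : ℤ} (hn : n < 0) :
    sat leZ SZ VZ (Fml.neg (Fml.box (Fml.var ()))) (some n) := by
  rintro v hv hbox
  obtain ⟨m, hm, hm0⟩ := hbox 0
  rw [leZ_some_iff.mp hv, Function.iterate_zero_apply, Option.some_inj] at hm
  omega

theorem not_sat_neg_neg_box_var_none :
    ¬ sat leZ SZ VZ (Fml.neg (Fml.neg (Fml.box (Fml.var ())))) none :=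
  fun h => h (some (-1)) (Or.inl rfl) (sat_neg_box_var_some_of_neg (by norm_num))

theorem not_sat_dia_neg_neg_box_var_none :
    ¬ sat leZ SZ VZ (Fml.dia (Fml.neg (Fml.neg (Fml.box (Fml.var ()))))) none := by
  rintro ⟨k, hk⟩
  rw [SZ_iterate_none] at hk
  exact not_sat_neg_neg_box_var_none hk

/-- The model on `ℤ ∪ {r}` is persistent (forward and backward confluent,
    monotone valuation), satisfies `¬¬◇□p` at `r` but not `◇¬¬□p`; hence
    `¬¬◇□p → ◇¬¬□p` fails at `r`, so it is not valid over persistent models. -/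
theorem not_valid_persistent :
    (∀ a b, leZ a b → leZ (SZ a) (SZ b)) ∧
    (∀ a b, leZ (SZ a) b → ∃ u, leZ a u ∧ SZ u = b) ∧
    (∀ a b, leZ a b → ∀ q, VZ a q → VZ b q) ∧
    sat leZ SZ VZ (Fml.neg (Fml.neg (Fml.dia (Fml.box (Fml.var ()))))) none ∧
    ¬ sat leZ SZ VZ (Fml.dia (Fml.neg (Fml.neg (Fml.box (Fml.var ()))))) none ∧
    ¬ sat leZ SZ VZ
        (Fml.impl (Fml.neg (Fml.neg (Fml.dia (Fml.box (Fml.var ())))))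
                  (Fml.dia (Fml.neg (Fml.neg (Fml.box (Fml.var ())))))) none :=
  ⟨fun _ _ => leZ_SZ_SZ, fun _ _ => exists_leZ_SZ_eq, fun _ _ => VZ_mono,
    sat_neg_neg_dia_box_var_none, not_sat_dia_neg_neg_box_var_none,
    not_sat_impl_of_refl (leZ_refl none) sat_neg_neg_dia_box_var_none
      not_sat_dia_neg_neg_box_var_none⟩
end

section
/- The formula ¬¬◇□p → ◇¬¬□p is valid over the class of finite persistent models: for every finite persistent model M = (W,≼,S,V) and every w ∈ W, if M,w ⊨ ¬¬◇□p then M,w ⊨ ◇¬¬□p. -/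
/-!
`¬¬◇□p` at `w` says that every `v ≽ w` has an extension at which `□p` holds after some delay.
Since `□p` is stable under `S`, each delay can be enlarged at will, so finiteness of `W`
yields one delay `M` that works for every `v ≽ w`. Backward confluence pulls any
`v' ≽ S^M w` back to some `v ≽ w`, and forward confluence pushes the `□p`-extension of `v`
forward to an extension of `v'`; hence `¬¬□p` holds at `S^M w`.
-/

section

variable {P W : Type} {le : W → W → Prop} {S : W → W} {V : W → P → Prop}

theorem sat_box_iterate {φ : Fml P} {x : W} (n : ℕ) (hx : sat le S V φ.box x) :
    sat le S V φ.box (S^[n] x) := fun k => by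
  rw [← Function.iterate_add_apply]
  exact hx (k + n)

theorem iterate_le_iterate (hfc : ∀ a b, le a b → le (S a) (S b)) (k : ℕ) {a b : W}
    (hab : le a b) : le (S^[k] a) (S^[k] b) := by
  induction k with
  | zero => exact hab
  | succ k ih =>
    rw [Function.iterate_succ_apply', Function.iterate_succ_apply']
    exact hfc _ _ ih

theorem exists_le_iterate_eq (hbc : ∀ a b, le (S a) b → ∃ u, le a u ∧ S u = b) (k : ℕ)
    {a b : W} (hab : le (S^[k] a) b) : ∃ u, le a u ∧ S^[k] u = b := by
  induction k generalizing b with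
  | zero => exact ⟨b, hab, rfl⟩
  | succ k ih =>
    rw [Function.iterate_succ_apply'] at hab
    obtain ⟨c, hac, rfl⟩ := hbc _ _ hab
    obtain ⟨u, hau, rfl⟩ := ih hac
    exact ⟨u, hau, Function.iterate_succ_apply' S k u⟩

theorem exists_uniform_delay_of_sat_neg_neg_dia_box [Finite W] {φ : Fml P} {w : W}
    (h : sat le S V φ.box.dia.neg.neg w) :
    ∃ M : ℕ, ∀ v, le w v → ∃ u, le v u ∧ sat le S V φ.box (S^[M] u) := by
  have hdelay : ∀ v, ∀ᶠ n in Filter.atTop,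
      le w v → ∃ u, le v u ∧ sat le S V φ.box (S^[n] u) := fun v =>
    Filter.eventually_imp_distrib_left.2 fun hv => by
      obtain ⟨u, hvu, m, hm⟩ := sat_neg_neg_iff.1 h v hv
      refine Filter.eventually_atTop.2 ⟨m, fun n hmn => ⟨u, hvu, ?_⟩⟩
      rw [← Nat.sub_add_cancel hmn, Function.iterate_add_apply]
      exact sat_box_iterate (n - m) hm
  exact (Filter.eventually_all.2 hdelay).exists

end

theorem valid_finite_persistent_general {P W : Type} [Finite W]
    (le : W → W → Prop) (S : W → W) (V : W → P → Prop)
    (hfc : ∀ a b, le a b → le (S a) (S b))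
    (hbc : ∀ a b, le (S a) b → ∃ u, le a u ∧ S u = b)
    (p : P) (w : W)
    (h : sat le S V (Fml.neg (Fml.neg (Fml.dia (Fml.box (Fml.var p))))) w) :
    sat le S V (Fml.dia (Fml.neg (Fml.neg (Fml.box (Fml.var p))))) w := by
  obtain ⟨M, hM⟩ := exists_uniform_delay_of_sat_neg_neg_dia_box h
  refine ⟨M, sat_neg_neg_iff.2 fun v' hv' => ?_⟩
  obtain ⟨v, hwv, rfl⟩ := exists_le_iterate_eq hbc M hv'
  obtain ⟨u, hvu, hu⟩ := hM v hwv
  exact ⟨S^[M] u, iterate_le_iterate hfc M hvu, hu⟩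

/-- `¬¬◇□p → ◇¬¬□p` is valid over the class of finite persistent models. -/
theorem valid_finite_persistent {P W : Type} [Finite W] [Nonempty W]
    (le : W → W → Prop) (S : W → W) (V : W → P → Prop)
    (hrefl : ∀ w, le w w)
    (htrans : ∀ a b c, le a b → le b c → le a c)
    (hantisymm : ∀ a b, le a b → le b a → a = b)
    (hV : ∀ w v, le w v → ∀ q, V w q → V v q)
    (hfc : ∀ a b, le a b → le (S a) (S b))
    (hbc : ∀ a b, le (S a) b → ∃ u, le a u ∧ S u = b)
    (p : P) (w : W)
    (h : sat le S V (Fml.neg (Fml.neg (Fml.dia (Fml.box (Fml.var p))))) w) :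
    sat le S V (Fml.dia (Fml.neg (Fml.neg (Fml.box (Fml.var p))))) w :=
  valid_finite_persistent_general le S V hfc hbc p w h
end

section
/- Let Σ be a set of intuitionistic formulas closed under subformulas, M = (W,≼,S,V) an intuitionistic dynamic model, and A = (W_A, ≼_A, λ) a 2^Σ-labeled poset. If there is a condensation (ρ,ι) from M^Σ to A (where M^Σ labels each world w by Σ(w) = {ψ ∈ Σ : M,w ⊨ ψ}), then A is a Σ-quasimodel: λ is monotone, and for each φ→ψ ∈ Σ and w ∈ W_A, φ→ψ ∈ λ(w) iff for all v ≽_A w, φ ∈ λ(v) implies ψ ∈ λ(v). -/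
/-- Closure under subformulas. -/
def Closed {P : Type} (Sg : Set (Fml P)) : Prop :=
  (∀ φ ψ, Fml.and φ ψ ∈ Sg → φ ∈ Sg ∧ ψ ∈ Sg) ∧
  (∀ φ ψ, Fml.or φ ψ ∈ Sg → φ ∈ Sg ∧ ψ ∈ Sg) ∧
  (∀ φ ψ, Fml.impl φ ψ ∈ Sg → φ ∈ Sg ∧ ψ ∈ Sg) ∧
  (∀ φ, Fml.next φ ∈ Sg → φ ∈ Sg) ∧
  (∀ φ, Fml.dia φ ∈ Sg → φ ∈ Sg) ∧
  (∀ φ, Fml.box φ ∈ Sg → φ ∈ Sg)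

/-! `M^Σ` is a Σ-quasimodel because satisfaction is persistent and `sat` interprets `→`
intuitionistically. The quasimodel conditions then transfer along a condensation `(ρ, ι)`:
a label of `A` is the label of its `ι`-image, the forward direction of the implication
clause pulls back along the monotone `ι`, and the backward direction pushes a witness
`v ≽ ι a` of `M^Σ` forward to `ρ v ≽ ρ (ι a) = a`. -/

theorem Function.iterate_map_rel {α : Type*} {r : α → α → Prop} {f : α → α}
    (hf : ∀ a b, r a b → r (f a) (f b)) (k : ℕ) {a b : α} (h : r a b) :
    r (f^[k] a) (f^[k] b) := by
  induction k generalizing a b with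
  | zero => exact h
  | succ k ih => exact ih (hf a b h)

theorem sat_mono {P W : Type} {le : W → W → Prop} {S : W → W} {V : W → P → Prop}
    (htrans : ∀ a b c, le a b → le b c → le a c)
    (hV : ∀ w v, le w v → ∀ q, V w q → V v q)
    (hfc : ∀ a b, le a b → le (S a) (S b)) :
    ∀ (φ : Fml P) {w v : W}, le w v → sat le S V φ w → sat le S V φ v
  | .var p, _, _, h, hs => hV _ _ h p hs
  | .bot, _, _, _, hs => hs
  | .and φ ψ, _, _, h, hs =>
    ⟨sat_mono htrans hV hfc φ h hs.1, sat_mono htrans hV hfc ψ h hs.2⟩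
  | .or φ ψ, _, _, h, hs => hs.imp (sat_mono htrans hV hfc φ h) (sat_mono htrans hV hfc ψ h)
  | .impl _ _, _, _, h, hs => fun u hvu => hs u (htrans _ _ _ h hvu)
  | .next φ, _, _, h, hs => sat_mono htrans hV hfc φ (hfc _ _ h) hs
  | .dia φ, _, _, h, hs =>
    hs.imp fun k => sat_mono htrans hV hfc φ (Function.iterate_map_rel hfc k h)
  | .box φ, _, _, h, hs =>
    fun k => sat_mono htrans hV hfc φ (Function.iterate_map_rel hfc k h) (hs k)

/-- The label `Σ(w)` of `w` in `M^Σ`. -/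
def sigmaLabel {P W : Type} (le : W → W → Prop) (S : W → W) (V : W → P → Prop)
    (Sg : Set (Fml P)) (w : W) : Set (Fml P) :=
  {ψ | ψ ∈ Sg ∧ sat le S V ψ w}

def IsQuasimodel {P X : Type} (le : X → X → Prop) (lab : X → Set (Fml P))
    (Sg : Set (Fml P)) : Prop :=
  (∀ a b, le a b → lab a ⊆ lab b) ∧
  (∀ φ ψ, Fml.impl φ ψ ∈ Sg → ∀ a,
    (Fml.impl φ ψ ∈ lab a ↔ ∀ b, le a b → φ ∈ lab b → ψ ∈ lab b))

def IsImmersion {P X Y : Type} (leX : X → X → Prop) (labX : X → Set (Fml P))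
    (leY : Y → Y → Prop) (labY : Y → Set (Fml P)) (f : X → Y) : Prop :=
  (∀ x, labY (f x) = labX x) ∧ ∀ x x', leX x x' → leY (f x) (f x')

theorem isQuasimodel_sigmaLabel {P W : Type} {le : W → W → Prop} {S : W → W}
    {V : W → P → Prop} (htrans : ∀ a b c, le a b → le b c → le a c)
    (hV : ∀ w v, le w v → ∀ q, V w q → V v q)
    (hfc : ∀ a b, le a b → le (S a) (S b)) {Sg : Set (Fml P)} (hcl : Closed Sg) :
    IsQuasimodel le (sigmaLabel le S V Sg) Sg := by
  refine ⟨fun w v hwv ψ hψ => ⟨hψ.1, sat_mono htrans hV hfc ψ hwv hψ.2⟩, ?_⟩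
  intro φ ψ himp w
  obtain ⟨hφ, hψ⟩ := hcl.2.2.1 φ ψ himp
  constructor
  · rintro ⟨-, hsat⟩ v hwv ⟨-, hφv⟩
    exact ⟨hψ, hsat v hwv hφv⟩
  · intro h
    exact ⟨himp, fun v hwv hφv => (h v hwv ⟨hφ, hφv⟩).2⟩

theorem IsQuasimodel.of_condensation {P X Y : Type} {leX : X → X → Prop}
    {labX : X → Set (Fml P)} {leY : Y → Y → Prop} {labY : Y → Set (Fml P)}
    {Sg : Set (Fml P)} {ρ : X → Y} {ι : Y → X} (hρ : IsImmersion leX labX leY labY ρ)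
    (hι : IsImmersion leY labY leX labX ι) (hid : Function.LeftInverse ρ ι)
    (hX : IsQuasimodel leX labX Sg) : IsQuasimodel leY labY Sg := by
  refine ⟨fun a b hab => ?_, fun φ ψ himp a => ?_⟩
  · rw [← hι.1 a, ← hι.1 b]
    exact hX.1 _ _ (hι.2 a b hab)
  rw [← hι.1 a, hX.2 φ ψ himp]
  constructor
  · intro h b hab
    rw [← hι.1 b]
    exact h (ι b) (hι.2 a b hab)
  · intro h v hv
    have hav : leY a (ρ v) := hid a ▸ hρ.2 _ _ hv
    rw [← hρ.1 v]
    exact h (ρ v) hav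

theorem condensation_quasimodel_general {P W A : Type}
    (le : W → W → Prop) (S : W → W) (V : W → P → Prop)
    (htrans : ∀ a b c, le a b → le b c → le a c)
    (hV : ∀ w v, le w v → ∀ q, V w q → V v q)
    (hfc : ∀ a b, le a b → le (S a) (S b))
    (Sg : Set (Fml P)) (hcl : Closed Sg)
    (leA : A → A → Prop)
    (lab : A → Set (Fml P))
    (ρ : W → A) (ι : A → W)
    -- ρ is an immersion from M^Σ to A
    (hρlab : ∀ w : W, lab (ρ w) = {ψ | ψ ∈ Sg ∧ sat le S V ψ w})
    (hρmono : ∀ w v : W, le w v → leA (ρ w) (ρ v))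
    -- ι is an immersion from A to M^Σ
    (hιlab : ∀ a : A, {ψ | ψ ∈ Sg ∧ sat le S V ψ (ι a)} = lab a)
    (hιmono : ∀ a b : A, leA a b → le (ι a) (ι b))
    (hid : ∀ a, ρ (ι a) = a) :
    (∀ a b : A, leA a b → lab a ⊆ lab b) ∧
    (∀ φ ψ, Fml.impl φ ψ ∈ Sg → ∀ a : A,
      (Fml.impl φ ψ ∈ lab a ↔ ∀ b, leA a b → φ ∈ lab b → ψ ∈ lab b)) :=
  (isQuasimodel_sigmaLabel htrans hV hfc hcl).of_condensation
    (ρ := ρ) (ι := ι) ⟨hρlab, hρmono⟩ ⟨hιlab, hιmono⟩ hid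

/-- If a `2^Σ`-labeled poset `A` admits a condensation `(ρ, ι)` from `M^Σ`,
    then `A` is a `Σ`-quasimodel. -/
theorem condensation_quasimodel {P W A : Type}
    (le : W → W → Prop) (S : W → W) (V : W → P → Prop)
    (hrefl : ∀ w, le w w)
    (htrans : ∀ a b c, le a b → le b c → le a c)
    (hantisymm : ∀ a b, le a b → le b a → a = b)
    (hV : ∀ w v, le w v → ∀ q, V w q → V v q)
    (hfc : ∀ a b, le a b → le (S a) (S b))
    (Sg : Set (Fml P)) (hcl : Closed Sg)
    (leA : A → A → Prop)
    (hreflA : ∀ a, leA a a)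
    (htransA : ∀ a b c, leA a b → leA b c → leA a c)
    (hantisymmA : ∀ a b, leA a b → leA b a → a = b)
    (lab : A → Set (Fml P))
    (ρ : W → A) (ι : A → W)
    -- ρ is an immersion from M^Σ to A
    (hρlab : ∀ w : W, lab (ρ w) = {ψ | ψ ∈ Sg ∧ sat le S V ψ w})
    (hρmono : ∀ w v : W, le w v → leA (ρ w) (ρ v))
    -- ι is an immersion from A to M^Σ
    (hιlab : ∀ a : A, {ψ | ψ ∈ Sg ∧ sat le S V ψ (ι a)} = lab a)
    (hιmono : ∀ a b : A, leA a b → le (ι a) (ι b))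
    (hsurj : Function.Surjective ρ)
    (hid : ∀ a, ρ (ι a) = a) :
    (∀ a b : A, leA a b → lab a ⊆ lab b) ∧
    (∀ φ ψ, Fml.impl φ ψ ∈ Sg → ∀ a : A,
      (Fml.impl φ ψ ∈ lab a ↔ ∀ b, leA a b → φ ∈ lab b → ψ ∈ lab b)) :=
  condensation_quasimodel_general le S V htrans hV hfc Sg hcl leA lab ρ ι hρlab hρmono hιlab hιmono
    hid
end

section
/- Given a finite label set Λ of cardinality n and a sequence T_1, …, T_m of Λ-labeled trees of level at most k with m > E(n,k), there are indices i < j ≤ m such that T_i and T_j are bimersive (there exist immersions in both directions). -/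
/-!
Call a point pure if every point below it carries its label. In a tree of finite level every
point lies above a pure point (otherwise proper chains descend forever), and by directedness all
pure points share one label, the germ. Two points having a non-germ-labelled point below them lie
in the same branch when they share such a lower bound; each branch is again a downward-directed
tree, of level one less. The shape of a tree of level at most `k + 1`, namely its germ together
with the set of shapes of its branches, takes at most `Efn n (k + 1)` values, and equal shapes
yield an immersion: each branch goes into a branch of the same shape, and the remaining,
germ-labelled points go to a pure point below the finitely many target branches. Pigeonhole
finishes the proof.
-/

def Efn : ℕ → ℕ → ℕ
  | _, 0 => 0
  | n, (k+1) => Efn n k + n * 2 ^ (Efn n k)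

/-- A `Λ`-labeled tree: a poset with a root below everything, whose principal
    downsets are linearly ordered, with a labeling of the nodes. -/
structure LTree (Λ : Type) where
  W : Type
  le : W → W → Prop
  refl : ∀ w, le w w
  trans : ∀ a b c, le a b → le b c → le a c
  antisymm : ∀ a b, le a b → le b a → a = b
  lab : W → Λ
  root : W
  root_le : ∀ w, le root w
  lin : ∀ w u v, le u w → le v w → le u v ∨ le v u

/-- `A` has level at most `k`: every proper increasing chain (strictly
    increasing, with consecutive labels distinct) has length at most `k`. -/
def LevelLe {Λ : Type} (A : LTree Λ) (k : ℕ) : Prop :=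
  ∀ l : List A.W,
    l.Chain' (fun a b => (A.le a b ∧ ¬ A.le b a) ∧ A.lab a ≠ A.lab b) →
    l.length ≤ k

/-- An immersion: a label-preserving, order-preserving function. -/
def Immersion {Λ : Type} (A B : LTree Λ) : Prop :=
  ∃ f : A.W → B.W,
    (∀ a, A.lab a = B.lab (f a)) ∧ ∀ a a', A.le a a' → B.le (f a) (f a')

-- Branches of a rooted tree need not have a least element, so the recursion runs over
-- downward-directed trees.
structure DirTree (Λ : Type) where
  W : Type
  [order : PartialOrder W]
  [nonempty : Nonempty W]
  [codirected : IsCodirectedOrder W]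
  lab : W → Λ
  lin : ∀ {w u v : W}, u ≤ w → v ≤ w → u ≤ v ∨ v ≤ u

attribute [instance] DirTree.order DirTree.nonempty DirTree.codirected

namespace DirTree

variable {Λ : Type} (A : DirTree Λ)

def ProperLT (a b : A.W) : Prop := a < b ∧ A.lab a ≠ A.lab b

def LevelLe (k : ℕ) : Prop := ∀ l : List A.W, l.IsChain A.ProperLT → l.length ≤ k

def Immerses (B : DirTree Λ) : Prop :=
  ∃ f : A.W → B.W, (∀ a, A.lab a = B.lab (f a)) ∧ Monotone f

def IsPure (x : A.W) : Prop := ∀ z ≤ x, A.lab z = A.lab x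

-- Meaningful only when pure points exist, which finite level guarantees (`LevelLe.lab_eq_germ`).
noncomputable def germ : Λ := A.lab (Classical.epsilon A.IsPure)

def IsHigh (x : A.W) : Prop := ∃ u ≤ x, A.lab u ≠ A.germ

def branch (x : A.W) : Set A.W := {y | ∃ u ≤ x, u ≤ y ∧ A.lab u ≠ A.germ}

variable {A}

theorem not_levelLe_zero : ¬ A.LevelLe 0 := fun h =>
  absurd (h [Classical.arbitrary A.W] (List.isChain_singleton _)) (by simp)

theorem IsPure.of_le {x y : A.W} (hy : A.IsPure y) (hxy : x ≤ y) : A.IsPure x :=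
  fun z hzx => (hy z (hzx.trans hxy)).trans (hy x hxy).symm

theorem IsPure.lab_eq {x y : A.W} (hx : A.IsPure x) (hy : A.IsPure y) : A.lab x = A.lab y := by
  obtain ⟨z, hzx, hzy⟩ := exists_le_le x y
  rw [← hx z hzx, ← hy z hzy]

theorem exists_lt_lab_ne {x : A.W} (hx : ¬ A.IsPure x) : ∃ z, A.ProperLT z x := by
  obtain ⟨z, hzx, hlab⟩ : ∃ z ≤ x, A.lab z ≠ A.lab x := by simpa [IsPure] using hx
  exact ⟨z, hzx.lt_of_ne (fun h => hlab (h ▸ rfl)), hlab⟩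

theorem exists_isChain_of_forall_not_isPure :
    ∀ (j : ℕ) (x : A.W), (∀ y ≤ x, ¬ A.IsPure y) →
      ∃ l : List A.W, l.length = j ∧ (x :: l).IsChain (flip A.ProperLT)
  | 0, x, _ => ⟨[], rfl, List.isChain_singleton x⟩
  | j + 1, x, hx => by
    obtain ⟨z, hz⟩ := exists_lt_lab_ne (hx x le_rfl)
    obtain ⟨l, hlen, hl⟩ :=
      exists_isChain_of_forall_not_isPure j z fun y hyz => hx y (hyz.trans hz.1.le)
    exact ⟨z :: l, by simp [hlen], List.isChain_cons_cons.2 ⟨hz, hl⟩⟩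

theorem LevelLe.exists_isPure_le {k : ℕ} (h : A.LevelLe k) (x : A.W) : ∃ y ≤ x, A.IsPure y := by
  by_contra! hx
  obtain ⟨l, hlen, hl⟩ := exists_isChain_of_forall_not_isPure k x hx
  have := h (x :: l).reverse (List.isChain_reverse.2 hl)
  simp [hlen] at this

theorem LevelLe.lab_eq_germ {k : ℕ} (h : A.LevelLe k) {y : A.W} (hy : A.IsPure y) :
    A.lab y = A.germ := by
  obtain ⟨z, -, hz⟩ := h.exists_isPure_le (Classical.arbitrary A.W)
  exact hy.lab_eq (Classical.epsilon_spec ⟨z, hz⟩)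

theorem lab_eq_germ_of_not_isHigh {a : A.W} (ha : ¬ A.IsHigh a) : A.lab a = A.germ := by
  by_contra hne
  exact ha ⟨a, le_rfl, hne⟩

theorem IsHigh.mono {a b : A.W} (ha : A.IsHigh a) (hab : a ≤ b) : A.IsHigh b :=
  let ⟨u, hua, hu⟩ := ha; ⟨u, hua.trans hab, hu⟩

theorem mem_branch_self {x : A.W} (hx : A.IsHigh x) : x ∈ A.branch x :=
  let ⟨u, hux, hu⟩ := hx; ⟨u, hux, hux, hu⟩

theorem mem_branch_of_le {x y : A.W} (hx : A.IsHigh x) (hxy : x ≤ y) : y ∈ A.branch x :=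
  let ⟨u, hux, hu⟩ := hx; ⟨u, hux, hux.trans hxy, hu⟩

theorem mem_branch_comm {x y : A.W} : y ∈ A.branch x ↔ x ∈ A.branch y :=
  ⟨fun ⟨u, h₁, h₂, hu⟩ => ⟨u, h₂, h₁, hu⟩, fun ⟨u, h₁, h₂, hu⟩ => ⟨u, h₂, h₁, hu⟩⟩

theorem mem_branch_trans {x y z : A.W} (hy : y ∈ A.branch x) (hz : z ∈ A.branch y) :
    z ∈ A.branch x := by
  obtain ⟨u, hux, huy, hu⟩ := hy
  obtain ⟨v, hvy, hvz, hv⟩ := hz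
  rcases A.lin huy hvy with huv | hvu
  · exact ⟨u, hux, huv.trans hvz, hu⟩
  · exact ⟨v, hvu.trans hux, hvz, hv⟩

theorem branch_eq_of_mem {x y : A.W} (hy : y ∈ A.branch x) : A.branch y = A.branch x :=
  Set.ext fun _ => ⟨mem_branch_trans hy, mem_branch_trans (mem_branch_comm.1 hy)⟩

theorem exists_le_le_mem_branch (x : A.W) :
    ∀ a ∈ A.branch x, ∀ b ∈ A.branch x, ∃ c ∈ A.branch x, c ≤ a ∧ c ≤ b := by
  rintro a ⟨u, hux, hua, hu⟩ b ⟨v, hvx, hvb, hv⟩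
  rcases A.lin hux hvx with huv | hvu
  · exact ⟨u, ⟨u, hux, le_rfl, hu⟩, hua, huv.trans hvb⟩
  · exact ⟨v, ⟨v, hvx, le_rfl, hv⟩, hvu.trans hua, hvb⟩

theorem LevelLe.exists_isPure_le_branch {k : ℕ} (h : A.LevelLe k) {x : A.W} (hx : A.IsHigh x) :
    ∃ y, A.IsPure y ∧ ∀ z ∈ A.branch x, y ≤ z := by
  obtain ⟨u, hux, hu⟩ := hx
  obtain ⟨y, hyu, hy⟩ := h.exists_isPure_le u
  refine ⟨y, hy, ?_⟩
  rintro z ⟨w, hwx, hwz, hw⟩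
  rcases A.lin hux hwx with huw | hwu
  · exact hyu.trans (huw.trans hwz)
  · rcases A.lin hwu hyu with hwy | hyw
    · exact absurd (h.lab_eq_germ (hy.of_le hwy)) hw
    · exact hyw.trans hwz

theorem LevelLe.not_isPure_of_mem_branch {k : ℕ} (h : A.LevelLe k) {x y : A.W}
    (hy : y ∈ A.branch x) : ¬ A.IsPure y := fun hp => by
  obtain ⟨u, -, huy, hu⟩ := hy
  exact hu ((hp u huy).trans (h.lab_eq_germ hp))

variable (A) in
def restrict (s : Set A.W) (hne : s.Nonempty)
    (hdir : ∀ a ∈ s, ∀ b ∈ s, ∃ c ∈ s, c ≤ a ∧ c ≤ b) : DirTree Λ where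
  W := s
  nonempty := hne.to_subtype
  codirected := ⟨fun a b =>
    let ⟨c, hc, hca, hcb⟩ := hdir a a.2 b b.2; ⟨⟨c, hc⟩, hca, hcb⟩⟩
  lab a := A.lab a
  lin := A.lin

theorem LevelLe.restrict {k : ℕ} (h : A.LevelLe (k + 1)) {s : Set A.W} (hne : s.Nonempty)
    (hdir : ∀ a ∈ s, ∀ b ∈ s, ∃ c ∈ s, c ≤ a ∧ c ≤ b) (hs : ∀ a ∈ s, ¬ A.IsPure a) :
    (A.restrict s hne hdir).LevelLe k := by
  rintro (_ | ⟨a, l⟩) hl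
  · simp
  obtain ⟨b, hb⟩ := exists_lt_lab_ne (hs a.1 a.2)
  have hchain : (b :: a.1 :: l.map Subtype.val).IsChain A.ProperLT :=
    List.isChain_cons_cons.2 ⟨hb, (List.isChain_map (l := a :: l) Subtype.val).2 hl⟩
  have hlen := h _ hchain
  have hmap : (l.map Subtype.val).length = l.length := List.length_map _
  simp only [List.length_cons] at hlen ⊢
  omega

variable (A) in
noncomputable def branchTree (x : A.W) (hx : A.IsHigh x) : DirTree Λ :=
  A.restrict (A.branch x) ⟨x, mem_branch_self hx⟩ (exists_le_le_mem_branch x)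

theorem LevelLe.branchTree {k : ℕ} (h : A.LevelLe (k + 1)) (x : A.W) (hx : A.IsHigh x) :
    (A.branchTree x hx).LevelLe k :=
  h.restrict _ _ fun _ => h.not_isPure_of_mem_branch

theorem immerses_of_forall_branch {U V : DirTree Λ} (y₀ : V.W)
    (hlow : ∀ a, ¬ U.IsHigh a → U.lab a = V.lab y₀)
    (hbranch : ∀ x, U.IsHigh x → ∃ σ : U.W → V.W,
      (∀ a ∈ U.branch x, U.lab a = V.lab (σ a) ∧ y₀ ≤ σ a) ∧ MonotoneOn σ (U.branch x)) :
    U.Immerses V := by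
  classical
  -- The map on a branch must not depend on which of its points names it.
  have hσ : ∀ s : Set U.W, ∃ σ : U.W → V.W, ∀ x, U.IsHigh x → U.branch x = s →
      (∀ a ∈ s, U.lab a = V.lab (σ a) ∧ y₀ ≤ σ a) ∧ MonotoneOn σ s := by
    intro s
    by_cases hs : ∃ x, U.IsHigh x ∧ U.branch x = s
    · obtain ⟨x, hx, rfl⟩ := hs
      obtain ⟨σ, hσ⟩ := hbranch x hx
      exact ⟨σ, fun x' _ hx' => hx' ▸ hσ⟩
    · exact ⟨fun _ => y₀, fun x hx hxs => absurd ⟨x, hx, hxs⟩ hs⟩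
  choose σ hσ using hσ
  have hσ_self : ∀ a, U.IsHigh a → (∀ b ∈ U.branch a, U.lab b = V.lab (σ (U.branch a) b) ∧
      y₀ ≤ σ (U.branch a) b) ∧ MonotoneOn (σ (U.branch a)) (U.branch a) :=
    fun a ha => hσ _ a ha rfl
  refine ⟨fun a => if U.IsHigh a then σ (U.branch a) a else y₀, fun a => ?_, fun a b hab => ?_⟩
  · by_cases ha : U.IsHigh a
    · simpa [ha] using ((hσ_self a ha).1 a (mem_branch_self ha)).1
    · simpa [ha] using hlow a ha
  · by_cases ha : U.IsHigh a
    · have hb : b ∈ U.branch a := mem_branch_of_le ha hab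
      simp only [ha, ha.mono hab, if_true, branch_eq_of_mem hb]
      exact (hσ_self a ha).2 (mem_branch_self ha) hb hab
    · by_cases hb : U.IsHigh b
      · simpa [ha, hb] using ((hσ_self b hb).1 b (mem_branch_self hb)).2
      · simp [ha, hb]

end DirTree

def Shape (Λ : Type) : ℕ → Type
  | 0 => Empty
  | k + 1 => Λ × Set (Shape Λ k)

instance Shape.finite {Λ : Type} [Finite Λ] : ∀ k, Finite (Shape Λ k)
  | 0 => inferInstanceAs (Finite Empty)
  | k + 1 => by
    have := Shape.finite (Λ := Λ) k
    exact inferInstanceAs (Finite (Λ × Set (Shape Λ k)))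

theorem Nat.card_set {α : Type} [Finite α] : Nat.card (Set α) = 2 ^ Nat.card α := by
  rw [show Nat.card (Set α) = Nat.card (α → Prop) from rfl, Nat.card_fun,
    Nat.card_eq_fintype_card, Fintype.card_prop]

theorem Shape.card_le {Λ : Type} [Finite Λ] : ∀ k, Nat.card (Shape Λ k) ≤ Efn (Nat.card Λ) k
  | 0 => by simp [Shape, Efn]
  | k + 1 =>
    calc Nat.card (Shape Λ (k + 1)) = Nat.card Λ * 2 ^ Nat.card (Shape Λ k) := by
          rw [show Shape Λ (k + 1) = (Λ × Set (Shape Λ k)) from rfl, Nat.card_prod, Nat.card_set]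
      _ ≤ Nat.card Λ * 2 ^ Efn (Nat.card Λ) k := by
          gcongr
          · exact one_le_two
          · exact Shape.card_le k
      _ ≤ Efn (Nat.card Λ) (k + 1) := Nat.le_add_left _ _

namespace DirTree

variable {Λ : Type}

noncomputable def shape : (k : ℕ) → (A : DirTree Λ) → A.LevelLe k → Shape Λ k
  | 0, _, h => (not_levelLe_zero h).elim
  | k + 1, A, h =>
    (A.germ, {s | ∃ x hx, shape k (A.branchTree x hx) (h.branchTree x hx) = s})

theorem LevelLe.exists_isPure_le_branches {ι : Type} [Finite ι] {A : DirTree Λ} {k : ℕ}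
    (h : A.LevelLe k) (x : ι → A.W) (hx : ∀ i, A.IsHigh (x i)) :
    ∃ y, A.IsPure y ∧ ∀ i, ∀ z ∈ A.branch (x i), y ≤ z := by
  choose y hy hyx using fun i => h.exists_isPure_le_branch (hx i)
  obtain ⟨y₀, hy₀⟩ := Finite.exists_ge y
  obtain ⟨y₁, hy₁, hy₁p⟩ := h.exists_isPure_le y₀
  exact ⟨y₁, hy₁p, fun i z hz => hy₁.trans ((hy₀ i).trans (hyx i z hz))⟩

theorem immerses_of_shape_eq [Finite Λ] :
    ∀ {k : ℕ} {U V : DirTree Λ} (hU : U.LevelLe k) (hV : V.LevelLe k),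
      shape k U hU = shape k V hV → U.Immerses V
  | 0, _, _, hU, _, _ => (not_levelLe_zero hU).elim
  | k + 1, U, V, hU, hV, heq => by
    classical
    have hgerm : U.germ = V.germ := congrArg Prod.fst heq
    have hbranches := congrArg Prod.snd heq
    choose tx htx hshape using fun ι : (shape (k + 1) V hV).2 => ι.2
    obtain ⟨y₀, hy₀, hy₀le⟩ := hV.exists_isPure_le_branches tx htx
    refine immerses_of_forall_branch y₀ (fun a ha => ?_) fun x hx => ?_
    · rw [lab_eq_germ_of_not_isHigh ha, hgerm, hV.lab_eq_germ hy₀]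
    set ι := shape k (U.branchTree x hx) (hU.branchTree x hx)
    have hι : ι ∈ (shape (k + 1) V hV).2 := hbranches ▸ ⟨x, hx, rfl⟩
    obtain ⟨τ, hτlab, hτmono⟩ := immerses_of_shape_eq (hU.branchTree x hx)
      (hV.branchTree _ (htx ⟨ι, hι⟩)) (hshape ⟨ι, hι⟩).symm
    refine ⟨fun a => if ha : a ∈ U.branch x then (τ ⟨a, ha⟩).1 else y₀,
      fun a ha => ?_, fun a ha b hb hab => ?_⟩
    · simp only [dif_pos ha]
      exact ⟨hτlab ⟨a, ha⟩, hy₀le _ _ (τ ⟨a, ha⟩).2⟩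
    · simp only [dif_pos ha, dif_pos hb]
      exact hτmono (a := ⟨a, ha⟩) (b := ⟨b, hb⟩) hab

end DirTree

def LTree.toDirTree {Λ : Type} (T : LTree Λ) : DirTree Λ where
  W := T.W
  order := { le := T.le, le_refl := T.refl, le_trans := T.trans, le_antisymm := T.antisymm }
  nonempty := ⟨T.root⟩
  codirected := ⟨fun a b => ⟨T.root, T.root_le a, T.root_le b⟩⟩
  lab := T.lab
  lin := T.lin _ _ _

/-- Among more than `Efn n k` labeled trees of level at most `k` over an
    `n`-element label set, two are bimersive. -/
theorem pigeonhole_bimersion {Λ : Type} [Fintype Λ] (n k m : ℕ)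
    (hn : Fintype.card Λ = n)
    (T : Fin m → LTree Λ) (hlev : ∀ i, LevelLe (T i) k) (hm : m > Efn n k) :
    ∃ i j : Fin m, i < j ∧ Immersion (T i) (T j) ∧ Immersion (T j) (T i) := by
  let s : Fin m → Shape Λ k := fun i => DirTree.shape k (T i).toDirTree (hlev i)
  have hs : ¬ Function.Injective s := fun hinj => by
    have := (Nat.card_le_card_of_injective s hinj).trans (Shape.card_le k)
    rw [Nat.card_fin, Nat.card_eq_fintype_card, hn] at this
    omega
  obtain ⟨i, j, hij, hne⟩ := Function.not_injective_iff.1 hs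
  have himm : ∀ {i j}, s i = s j → Immersion (T i) (T j) := DirTree.immerses_of_shape_eq _ _
  rcases hne.lt_or_gt with h | h
  · exact ⟨i, j, h, himm hij, himm hij.symm⟩
  · exact ⟨j, i, h, himm hij.symm, himm hij⟩
end
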